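/- Any surjective quandle homomorphism h : Q → R factors as h = f ∘ g_N, where N = ker(Inn(h)) ◁ Inn(Q), g_N : Q → Q/N is the orbit quotient map, and f : Q/N → R is a rigid quotient. -/

import Mathlib

/-! Common setup: quandles with the right-action conventions of Joyce and of
Braun–Crotwell–Liu–Weston–Yetter.  The inner automorphism group is realized
inside the opposite of the permutation group, so that it acts on `Q` on the
right (the product `g * h` means "first `g`, then `h`"). -/

open MulOpposite

structure QuandleStr (Q : Type*) where
  act : Q → Q → Q               -- x ▷ y
  inv : Q → Q → Q               -- x ▷⁻¹ y
  idem : ∀ x, act x x = x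
  inv_act : ∀ x y, inv (act x y) y = x
  act_inv : ∀ x y, act (inv x y) y = x
  distrib : ∀ x y z, act (act x y) z = act (act x z) (act y z)

namespace QuandleStr

variable {Q : Type*} (S : QuandleStr Q)

/-- The symmetry `S_x : y ↦ y ▷ x`, as a permutation of `Q`. -/
def sym (x : Q) : Equiv.Perm Q where
  toFun y := S.act y x
  invFun y := S.inv y x
  left_inv y := S.inv_act y x
  right_inv y := S.act_inv y x

/-- The inner automorphism group `Inn(Q)`: the subgroup generated by the
symmetries, with right-to-left composition (opposite permutation group). -/
def Inn : Subgroup (Equiv.Perm Q)ᵐᵒᵖ :=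
  Subgroup.closure (Set.range fun x => op (S.sym x))

/-- The right action `q · g` of `Inn(Q)` on `Q`. -/
def ract (q : Q) (g : S.Inn) : Q := (unop (g : (Equiv.Perm Q)ᵐᵒᵖ)) q

lemma ract_one (q : Q) : S.ract q 1 = q := rfl

lemma ract_mul (q : Q) (g h : S.Inn) :
    S.ract q (g * h) = S.ract (S.ract q g) h := rfl

/-- `S_x` as an element of `Inn(Q)`. -/
def symInn (x : Q) : S.Inn :=
  ⟨op (S.sym x), Subgroup.subset_closure ⟨x, rfl⟩⟩

/-- The stabilizer of `q` in `Inn(Q)`. -/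
def stab (q : Q) : Subgroup S.Inn where
  carrier := {g | S.ract q g = q}
  one_mem' := rfl
  mul_mem' := by
    intro a b ha hb
    simp only [Set.mem_setOf_eq] at *
    rw [ract_mul, ha, hb]
  inv_mem' := by
    intro a ha
    simp only [Set.mem_setOf_eq] at *
    conv_lhs => rw [← ha, ← ract_mul]
    simp [ract_one]

/-- A quandle is connected iff `Inn(Q)` acts transitively. -/
def Connected : Prop := ∀ a b : Q, ∃ g : S.Inn, S.ract a g = b

/-- The orbit equivalence relation on `Q` induced by a subgroup `N ≤ Inn(Q)`. -/
def orbRel (N : Subgroup S.Inn) : Setoid Q where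
  r a b := ∃ n : N, S.ract a ↑n = b
  iseqv := by
    constructor
    · exact fun a => ⟨1, rfl⟩
    · rintro a b ⟨n, rfl⟩
      refine ⟨n⁻¹, ?_⟩
      rw [← ract_mul]
      simp [ract_one]
    · rintro a b c ⟨n, rfl⟩ ⟨m, rfl⟩
      exact ⟨n * m, (S.ract_mul a ↑n ↑m).symm⟩

end QuandleStr

namespace QuandleStr

variable {Q : Type*} (S : QuandleStr Q)

lemma inn_ext {g h : S.Inn} (H : ∀ q, S.ract q g = S.ract q h) : g = h :=
  Subtype.ext (MulOpposite.unop_injective (Equiv.ext H))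

lemma ract_symInn (a x : Q) : S.ract a (S.symInn x) = S.act a x := rfl

lemma ract_symInn_inv (a x : Q) : S.ract a (S.symInn x)⁻¹ = S.inv a x := rfl

lemma ract_ract_inv (a : Q) (g : S.Inn) : S.ract (S.ract a g) g⁻¹ = a := by
  rw [← ract_mul, mul_inv_cancel, ract_one]

lemma ract_inv_ract (a : Q) (g : S.Inn) : S.ract (S.ract a g⁻¹) g = a := by
  rw [← ract_mul, inv_mul_cancel, ract_one]

/-- Induction principle for elements of `Inn(Q)`. -/
@[elab_as_elim]
lemma inn_induction {p : S.Inn → Prop}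
    (mem : ∀ x : Q, p (S.symInn x)) (one : p 1)
    (mul : ∀ g h, p g → p h → p (g * h))
    (inv : ∀ g, p g → p g⁻¹) (g : S.Inn) : p g := by
  obtain ⟨k, hk⟩ := g
  induction hk using Subgroup.closure_induction with
  | mem x hx =>
    obtain ⟨y, rfl⟩ := hx
    exact mem y
  | one => exact one
  | mul x y hx hy px py => exact mul ⟨x, hx⟩ ⟨y, hy⟩ px py
  | inv x hx px => exact inv ⟨x, hx⟩ px

/-- Conjugation formula: `S_{y·g} = g⁻¹ S_y g`. -/
lemma symInn_ract (g : S.Inn) : ∀ y : Q,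
    S.symInn (S.ract y g) = g⁻¹ * S.symInn y * g := by
  induction g using S.inn_induction with
  | mem x =>
    intro y
    apply S.inn_ext
    intro z
    rw [ract_symInn, ract_mul, ract_mul, ract_symInn_inv, ract_symInn, ract_symInn,
      ract_symInn, S.distrib, S.act_inv]
  | one => intro y; simp [ract_one]
  | mul g h ihg ihh =>
    intro y
    rw [ract_mul, ihh, ihg]
    group
  | inv g ih =>
    intro y
    have := ih (S.ract y g⁻¹)
    rw [S.ract_inv_ract] at this
    rw [this]
    group

/-- If a hom into `Inn(Q)` hits every symmetry, it is surjective. -/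
lemma inn_hom_surjective {G : Type*} [Group G] (ψ : G →* S.Inn)
    (hg : ∀ x : Q, ∃ g, ψ g = S.symInn x) : Function.Surjective ψ := by
  intro k
  induction k using S.inn_induction with
  | mem x => exact hg x
  | one => exact ⟨1, map_one ψ⟩
  | mul g h ihg ihh =>
    obtain ⟨a, rfl⟩ := ihg
    obtain ⟨b, rfl⟩ := ihh
    exact ⟨a * b, map_mul ψ a b⟩
  | inv g ih =>
    obtain ⟨a, rfl⟩ := ih
    exact ⟨a⁻¹, map_inv ψ a⟩

section Quot

variable (N : Subgroup S.Inn) [hN : N.Normal]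

lemma mem_conj_mul (x y g : S.Inn) (hx : x ∈ N) (hy : y ∈ N) :
    g⁻¹ * x * g * y ∈ N :=
  mul_mem (hN.conj_mem' x hx g) hy

lemma mem_conj_mul' (x y g : S.Inn) (hx : x ∈ N) (hy : y ∈ N) :
    g * x * g⁻¹ * y ∈ N :=
  mul_mem (hN.conj_mem x hx g) hy

omit hN in
lemma mk_eq_of {a b : Q} (n : N) (h : S.ract a ↑n = b) :
    Quotient.mk (S.orbRel N) a = Quotient.mk (S.orbRel N) b :=
  Quotient.sound ⟨n, h⟩

/-- The quotient quandle `Q/N`. -/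
def quot : QuandleStr (Quotient (S.orbRel N)) where
  act := Quotient.lift₂ (fun a b => Quotient.mk (S.orbRel N) (S.act a b)) (by
    rintro a b a' b' ⟨n, rfl⟩ ⟨m, rfl⟩
    refine S.mk_eq_of N ⟨(S.symInn b)⁻¹ * (↑n * (↑m)⁻¹) * S.symInn b * ↑m,
      S.mem_conj_mul N _ _ _ (mul_mem n.2 (inv_mem m.2)) m.2⟩ ?_
    show S.ract (S.ract a (S.symInn b)) _ = S.ract (S.ract a ↑n) (S.symInn (S.ract b ↑m))
    rw [S.symInn_ract, ← ract_mul, ← ract_mul]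
    congr 1
    group)
  inv := Quotient.lift₂ (fun a b => Quotient.mk (S.orbRel N) (S.inv a b)) (by
    rintro a b a' b' ⟨n, rfl⟩ ⟨m, rfl⟩
    refine S.mk_eq_of N ⟨S.symInn b * (↑n * (↑m)⁻¹) * (S.symInn b)⁻¹ * ↑m,
      S.mem_conj_mul' N _ _ _ (mul_mem n.2 (inv_mem m.2)) m.2⟩ ?_
    show S.ract (S.ract a (S.symInn b)⁻¹) _ = S.ract (S.ract a ↑n) (S.symInn (S.ract b ↑m))⁻¹
    rw [S.symInn_ract, ← ract_mul, ← ract_mul]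
    congr 1
    group)
  idem := by
    intro x
    induction x using Quotient.ind with | _ a =>
    exact congrArg (Quotient.mk (S.orbRel N)) (S.idem a)
  inv_act := by
    intro x y
    induction x using Quotient.ind with | _ a =>
    induction y using Quotient.ind with | _ b =>
    exact congrArg (Quotient.mk (S.orbRel N)) (S.inv_act a b)
  act_inv := by
    intro x y
    induction x using Quotient.ind with | _ a =>
    induction y using Quotient.ind with | _ b =>
    exact congrArg (Quotient.mk (S.orbRel N)) (S.act_inv a b)
  distrib := by
    intro x y z
    induction x using Quotient.ind with | _ a =>
    induction y using Quotient.ind with | _ b =>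
    induction z using Quotient.ind with | _ c =>
    exact congrArg (Quotient.mk (S.orbRel N)) (S.distrib a b c)

lemma descend_wd (g : S.Inn) :
    ∀ a b : Q, (S.orbRel N).r a b →
      Quotient.mk (S.orbRel N) (S.ract a g) = Quotient.mk (S.orbRel N) (S.ract b g) := by
  rintro a b ⟨n, rfl⟩
  refine S.mk_eq_of N ⟨g⁻¹ * ↑n * g * 1, S.mem_conj_mul N _ _ _ n.2 (one_mem N)⟩ ?_
  show S.ract (S.ract a g) _ = S.ract (S.ract a ↑n) g
  rw [← ract_mul, ← ract_mul]
  congr 1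
  group

/-- The permutation of `Q/N` induced by `g ∈ Inn(Q)`. -/
def descendPerm (g : S.Inn) : Equiv.Perm (Quotient (S.orbRel N)) where
  toFun := Quotient.lift (fun a => Quotient.mk (S.orbRel N) (S.ract a g)) (S.descend_wd N g)
  invFun := Quotient.lift (fun a => Quotient.mk (S.orbRel N) (S.ract a g⁻¹)) (S.descend_wd N g⁻¹)
  left_inv := by
    intro x
    induction x using Quotient.ind with | _ a =>
    exact congrArg (Quotient.mk (S.orbRel N)) (S.ract_ract_inv a g)
  right_inv := by
    intro x
    induction x using Quotient.ind with | _ a =>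
    exact congrArg (Quotient.mk (S.orbRel N)) (S.ract_inv_ract a g)

/-- `descend` as a monoid hom into the opposite permutation group. -/
def descendHom : S.Inn →* (Equiv.Perm (Quotient (S.orbRel N)))ᵐᵒᵖ where
  toFun g := MulOpposite.op (S.descendPerm N g)
  map_one' := by
    apply congrArg MulOpposite.op
    apply Equiv.ext
    intro x
    induction x using Quotient.ind with | _ a =>
    rfl
  map_mul' g h := by
    show _ = MulOpposite.op (S.descendPerm N h * S.descendPerm N g)
    apply congrArg MulOpposite.op
    apply Equiv.ext
    intro x
    induction x using Quotient.ind with | _ a =>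
    rfl

lemma descendPerm_symInn (x : Q) :
    S.descendPerm N (S.symInn x) = (S.quot N).sym (Quotient.mk (S.orbRel N) x) := by
  apply Equiv.ext
  intro z
  induction z using Quotient.ind with | _ a =>
  rfl

lemma descendHom_mem (g : S.Inn) : S.descendHom N g ∈ (S.quot N).Inn := by
  induction g using S.inn_induction with
  | mem x =>
    rw [show S.descendHom N (S.symInn x) = MulOpposite.op (S.descendPerm N (S.symInn x)) from rfl,
      S.descendPerm_symInn N x]
    exact Subgroup.subset_closure ⟨Quotient.mk (S.orbRel N) x, rfl⟩
  | one => rw [map_one]; exact one_mem _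
  | mul g h ihg ihh => rw [map_mul]; exact mul_mem ihg ihh
  | inv g ih => rw [map_inv]; exact inv_mem ih

/-- The induced homomorphism `Inn(Q) → Inn(Q/N)`. -/
def proj : S.Inn →* (S.quot N).Inn :=
  (S.descendHom N).codRestrict _ (S.descendHom_mem N)

lemma proj_symInn (x : Q) :
    S.proj N (S.symInn x) = (S.quot N).symInn (Quotient.mk (S.orbRel N) x) :=
  Subtype.ext (congrArg MulOpposite.op (S.descendPerm_symInn N x))

lemma proj_surjective : Function.Surjective (S.proj N) := by
  apply (S.quot N).inn_hom_surjective
  intro xq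
  induction xq using Quotient.ind with | _ x =>
  exact ⟨S.symInn x, S.proj_symInn N x⟩

end Quot

end QuandleStr

/-- Equivariance of a quandle homomorphism with respect to the induced map
on inner automorphism groups. -/
lemma QuandleStr.hom_ract {Q R : Type*} (S : QuandleStr Q) (T : QuandleStr R)
    (h : Q → R)
    (hhom : ∀ a b : Q, h (S.act a b) = T.act (h a) (h b))
    (Φ : S.Inn →* T.Inn) (hΦ : ∀ x : Q, Φ (S.symInn x) = T.symInn (h x))
    (g : S.Inn) : ∀ a : Q, h (S.ract a g) = T.ract (h a) (Φ g) := by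
  induction g using S.inn_induction with
  | mem x =>
    intro a
    rw [hΦ x]
    exact hhom a x
  | one =>
    intro a
    rw [map_one]
    rfl
  | mul g g' ihg ihg' =>
    intro a
    rw [S.ract_mul, ihg' (S.ract a g), ihg a, map_mul, T.ract_mul]
  | inv g ih =>
    intro a
    have key : T.ract (h (S.ract a g⁻¹)) (Φ g) = h a := by
      rw [← ih (S.ract a g⁻¹), S.ract_inv_ract]
    have hinj : Function.Injective (fun r => T.ract r (Φ g)) :=
      (MulOpposite.unop (↑(Φ g) : (Equiv.Perm R)ᵐᵒᵖ)).injective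
    apply hinj
    show T.ract (h (S.ract a g⁻¹)) (Φ g) = T.ract (T.ract (h a) (Φ g⁻¹)) (Φ g)
    rw [key, ← T.ract_mul, ← map_mul, inv_mul_cancel, map_one, T.ract_one]

/-- Any surjective quandle homomorphism `h : Q → R` factors as
`h = f ∘ g_N` with `N = ker(Inn h)`, `g_N : Q → Q/N` the orbit quotient map and
`f : Q/N → R` a rigid quotient. -/
theorem surjective_hom_factorization {Q R : Type*}
    (S : QuandleStr Q) (T : QuandleStr R)
    (h : Q → R) (hsurj : Function.Surjective h)
    (hhom : ∀ a b : Q, h (S.act a b) = T.act (h a) (h b))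
    (Φ : S.Inn →* T.Inn) (hΦ : ∀ x : Q, Φ (S.symInn x) = T.symInn (h x)) :
    ∃ (Qn : QuandleStr (Quotient (S.orbRel Φ.ker)))
      (_ : ∀ a b : Q,
        Qn.act (Quotient.mk (S.orbRel Φ.ker) a) (Quotient.mk (S.orbRel Φ.ker) b) =
          Quotient.mk (S.orbRel Φ.ker) (S.act a b))
      (f : Quotient (S.orbRel Φ.ker) → R),
        (∀ a b, f (Qn.act a b) = T.act (f a) (f b)) ∧
        Function.Surjective f ∧
        (∀ q : Q, f (Quotient.mk (S.orbRel Φ.ker) q) = h q) ∧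
        ∃ Ψ : Qn.Inn →* T.Inn,
          (∀ a, Ψ (Qn.symInn a) = T.symInn (f a)) ∧ Function.Bijective Ψ := by
  classical
  have hract := QuandleStr.hom_ract S T h hhom Φ hΦ
  refine ⟨S.quot Φ.ker, fun a b => rfl,
    Quotient.lift h ?_, ?_, ?_, fun q => rfl, ?_⟩
  · -- well-definedness of f
    rintro a b ⟨n, rfl⟩
    rw [hract ↑n a, MonoidHom.mem_ker.mp n.2, T.ract_one]
  · -- f is a quandle homomorphism
    intro a b
    induction a using Quotient.ind with | _ x =>
    induction b using Quotient.ind with | _ y =>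
    exact hhom x y
  · -- f is surjective
    intro r
    obtain ⟨q, rfl⟩ := hsurj r
    exact ⟨Quotient.mk (S.orbRel Φ.ker) q, rfl⟩
  · -- the rigid part : Ψ
    have hker : ∀ g : S.Inn, g ∈ (S.proj Φ.ker).ker → Φ g = 1 := by
      intro g hg
      have hfix : ∀ a : Q, T.ract (h a) (Φ g) = h a := by
        intro a
        have h2 : Quotient.mk (S.orbRel Φ.ker) (S.ract a g) = Quotient.mk (S.orbRel Φ.ker) a :=
          congrArg (fun k => (S.quot Φ.ker).ract (Quotient.mk (S.orbRel Φ.ker) a) k) hg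
        obtain ⟨m, hm⟩ := Quotient.exact h2
        have h3 : h (S.ract (S.ract a g) ↑m) = h a := congrArg h hm
        rw [hract ↑m (S.ract a g), MonoidHom.mem_ker.mp m.2, T.ract_one, hract g a] at h3
        exact h3
      refine T.inn_ext fun q => ?_
      obtain ⟨a, rfl⟩ := hsurj q
      exact hfix a
    have hker' : ∀ g : S.Inn, Φ g = 1 → g ∈ (S.proj Φ.ker).ker := by
      intro g hg
      refine Subtype.ext (MulOpposite.unop_injective (Equiv.ext fun x => ?_))
      induction x using Quotient.ind with | _ a =>
      show Quotient.mk (S.orbRel Φ.ker) (S.ract a g) = Quotient.mk (S.orbRel Φ.ker) a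
      exact (S.mk_eq_of Φ.ker ⟨g, MonoidHom.mem_ker.mpr hg⟩ rfl).symm
    have hle : (S.proj Φ.ker).ker ≤ Φ.ker := fun g hg => MonoidHom.mem_ker.mpr (hker g hg)
    have projsurj := S.proj_surjective Φ.ker
    set e := QuotientGroup.quotientKerEquivOfSurjective (S.proj Φ.ker) projsurj with he_def
    set Φ' : S.Inn ⧸ (S.proj Φ.ker).ker →* T.Inn :=
      QuotientGroup.lift (S.proj Φ.ker).ker Φ hle with hΦ'_def
    have hΨproj : ∀ g : S.Inn,
        Φ'.comp e.symm.toMonoidHom (S.proj Φ.ker g) = Φ g := by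
      intro g
      have h0 : ∀ x, e x = QuotientGroup.kerLift (S.proj Φ.ker) x := fun x => rfl
      have h1 : e (QuotientGroup.mk g) = S.proj Φ.ker g := by
        rw [h0]
        exact QuotientGroup.kerLift_mk _ g
      have h2 : e.symm (S.proj Φ.ker g) = QuotientGroup.mk g := by
        rw [← h1, MulEquiv.symm_apply_apply]
      show Φ' (e.symm (S.proj Φ.ker g)) = Φ g
      rw [h2]
      exact QuotientGroup.lift_mk' _ _ g
    refine ⟨Φ'.comp e.symm.toMonoidHom, ?_, ?_, ?_⟩
    · -- Ψ sends symmetries to symmetries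
      intro a
      induction a using Quotient.ind with | _ x =>
      rw [← S.proj_symInn Φ.ker x, hΨproj (S.symInn x), hΦ x]
      rfl
    · -- injective
      have hΦ'inj : Function.Injective Φ' := by
        refine (injective_iff_map_eq_one Φ').mpr ?_
        intro x hx
        refine QuotientGroup.induction_on x (fun g hg => ?_) hx
        rw [hΦ'_def, QuotientGroup.lift_mk'] at hg
        exact (QuotientGroup.eq_one_iff g).mpr (hker' g hg)
      exact hΦ'inj.comp e.symm.injective
    · -- surjective
      have hΦsurj : Function.Surjective Φ := by
        refine T.inn_hom_surjective Φ fun r => ?_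
        obtain ⟨x, rfl⟩ := hsurj r
        exact ⟨S.symInn x, hΦ x⟩
      intro t
      obtain ⟨g, hg⟩ := hΦsurj t
      refine ⟨S.proj Φ.ker g, ?_⟩
      rw [hΨproj g]
      exact hg
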